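/- (Kato-type inequality) Let n ≥ 1, let F : ℝⁿ → [0,∞) be a strongly convex Minkowski norm of class C² on ℝⁿ∖{0}, let ξ ∈ ℝⁿ∖{0}, write F_k = ∂F/∂ξ_k(ξ) and a_{ij} = ∂²(½F²)/∂ξ_i∂ξ_j(ξ). Then for every symmetric n×n real matrix U = (U_{ij}): Σ_{i,j,k,l} a_{ij} a_{kl} U_{ik} U_{jl} ≥ Σ_{i,j,k,l} a_{ij} F_k F_l U_{ik} U_{jl}. -/

import Mathlib

open Real

noncomputable section

/-- The `i`-th partial derivative of `f : ℝⁿ → ℝ` at `x`. -/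
def pd {n : ℕ} (f : EuclideanSpace ℝ (Fin n) → ℝ) (i : Fin n)
    (x : EuclideanSpace ℝ (Fin n)) : ℝ :=
  fderiv ℝ f x (EuclideanSpace.single i 1)

/-- `a_{ij}(ξ) = ∂²(½F²)/∂ξ_i∂ξ_j (ξ)`. -/
def aCoeff {n : ℕ} (F : EuclideanSpace ℝ (Fin n) → ℝ) (i j : Fin n)
    (ξ : EuclideanSpace ℝ (Fin n)) : ℝ :=
  pd (pd (fun η => F η ^ 2 / 2) i) j ξ

/-- A Minkowski norm on ℝⁿ: nonnegative, convex, even, positively 1-homogeneous,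
and positive away from the origin. -/
structure IsMinkowskiNorm {n : ℕ} (F : EuclideanSpace ℝ (Fin n) → ℝ) : Prop where
  nonneg : ∀ ξ, 0 ≤ F ξ
  convexOn : ConvexOn ℝ Set.univ F
  even : ∀ ξ, F (-ξ) = F ξ
  homog : ∀ (t : ℝ) (ξ : EuclideanSpace ℝ (Fin n)), F (t • ξ) = |t| * F ξ
  pos : ∀ ξ, ξ ≠ 0 → 0 < F ξ

/-- A strongly convex Minkowski norm of class C²: additionally `F` is C² away from
the origin and the Hessian of `F²` is positive definite away from the origin. -/
structure IsStronglyConvexMinkowskiNormC2 {n : ℕ}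
    (F : EuclideanSpace ℝ (Fin n) → ℝ) extends IsMinkowskiNorm F : Prop where
  contDiff2 : ContDiffOn ℝ 2 F {(0 : EuclideanSpace ℝ (Fin n))}ᶜ
  posDef : ∀ ξ : EuclideanSpace ℝ (Fin n), ξ ≠ 0 →
    ∀ V : EuclideanSpace ℝ (Fin n), V ≠ 0 →
      0 < ∑ i, ∑ j, aCoeff F i j ξ * V i * V j

/-! Let `A = (a_ij)` be the Hessian of `F²/2` at `ξ` and `v = ∇F(ξ)`. Euler's relation for the
1-homogeneous functions `F` and `∂_i(F²/2) = F F_i` gives `A ξ = F v` and `ξ ⬝ v = F`, and then the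
Cauchy–Schwarz inequality for the form `A` shows that `A - v vᵀ` is positive semidefinite:
`(v ⬝ y)² = (Aξ ⬝ y)² / F² ≤ (ξ ⬝ Aξ)(y ⬝ Ay) / F² = y ⬝ Ay`. The difference of the two sides of the
inequality is `∑_{k,l} (UᵀAU)_{kl} (A - v vᵀ)_{kl}`, the entry sum of the Hadamard product of two
positive semidefinite matrices, which is nonnegative by the Schur product theorem. -/

open Filter Topology

namespace Matrix
variable {ι : Type*} [Fintype ι]

theorem sum_sum_transpose_mul_mul_apply_mul {R : Type*} [CommSemiring R] (A B U : Matrix ι ι R) :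
    ∑ k, ∑ l, (Uᵀ * A * U) k l * B k l
      = ∑ i, ∑ j, ∑ k, ∑ l, A i j * B k l * U i k * U j l := by
  simp only [mul_apply, transpose_apply, Finset.sum_mul]
  conv_rhs => rw [Finset.sum_comm]
  rw [Finset.sum_comm_cycle]
  refine Finset.sum_congr rfl fun j _ => ?_
  rw [Finset.sum_comm_cycle]
  exact Finset.sum_congr rfl fun i _ => Finset.sum_congr rfl fun k _ =>
    Finset.sum_congr rfl fun l _ => by ring

theorem PosSemidef.sum_sum_mul_nonneg {A B : Matrix ι ι ℝ} (hA : A.PosSemidef)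
    (hB : B.PosSemidef) : 0 ≤ ∑ k, ∑ l, A k l * B k l := by
  simpa [dotProduct, mulVec, Finset.mul_sum] using
    (hA.hadamard hB).dotProduct_mulVec_nonneg fun _ => 1

theorem PosSemidef.sub_vecMulVec {A : Matrix ι ι ℝ} (hA : A.PosSemidef) {x v : ι → ℝ} {c : ℝ}
    (hc : c ≠ 0) (hAx : A *ᵥ x = c • v) (hxv : x ⬝ᵥ v = c) :
    (A - vecMulVec v v).PosSemidef := by
  refine .of_dotProduct_mulVec_nonneg (hA.isHermitian.sub
    (by simpa using (posSemidef_vecMulVec_self_star v).isHermitian)) fun y => ?_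
  have hxA : x ᵥ* A = c • v := by
    rw [← mulVec_transpose, ← conjTranspose_eq_transpose_of_trivial, hA.isHermitian.eq, hAx]
  -- `w ⬝ A w = c² (y ⬝ A y - (v ⬝ y)²)` for `w = c y - (v ⬝ y) x`.
  have key := hA.dotProduct_mulVec_nonneg (c • y - (v ⬝ᵥ y) • x)
  simp only [star_trivial, mulVec_sub, mulVec_smul, sub_dotProduct, dotProduct_sub, smul_dotProduct,
    dotProduct_smul, hAx, sub_mulVec, vecMulVec_mulVec, op_smul_eq_smul, smul_eq_mul] at key ⊢
  rw [dotProduct_mulVec x A y, hxA] at key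
  simp only [smul_dotProduct, hxv, smul_eq_mul, dotProduct_comm y v] at key ⊢
  have hsq : 0 ≤ c ^ 2 * (y ⬝ᵥ A *ᵥ y - v ⬝ᵥ y * v ⬝ᵥ y) := by linear_combination key
  exact nonneg_of_mul_nonneg_right hsq (by positivity)

end Matrix

section Homogeneous
variable {E : Type*} [NormedAddCommGroup E] [NormedSpace ℝ E]

theorem fderiv_apply_self_of_homogeneous {f : E → ℝ} {x : E} (hf : DifferentiableAt ℝ f x)
    (k : ℕ) (hom : ∀ᶠ t in 𝓝 (1 : ℝ), f (t • x) = t ^ k * f x) :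
    fderiv ℝ f x x = k * f x := by
  have hline : HasDerivAt (fun t : ℝ => f (t • x)) (fderiv ℝ f x x) 1 :=
    hf.hasFDerivAt.comp_hasDerivAt_of_eq (1 : ℝ)
      (by simpa using (hasDerivAt_id (1 : ℝ)).smul_const x) (one_smul ℝ x).symm
  have hpow : HasDerivAt (fun t : ℝ => t ^ k * f x) (k * f x) 1 := by
    simpa using (hasDerivAt_pow k (1 : ℝ)).mul_const (f x)
  exact hline.unique (hpow.congr_of_eventuallyEq hom)

theorem fderiv_smul_of_homogeneous {f : E → ℝ} {k : ℕ}
    (hom : ∀ (t : ℝ) y, f (t • y) = t ^ (k + 1) * f y) {t : ℝ} (ht : t ≠ 0) (x : E) :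
    fderiv ℝ f (t • x) = t ^ k • fderiv ℝ f x := by
  have h : fderiv ℝ (fun y => f (t • y)) x = t • fderiv ℝ f (t • x) := fderiv_comp_smul t
  have hf : (fun y => f (t • y)) = t ^ (k + 1) • f := by ext y; simp [hom]
  rw [hf, fderiv_const_smul_field, Pi.smul_apply, pow_succ', mul_smul] at h
  exact smul_right_injective _ ht h.symm

end Homogeneous

section PartialDerivatives
variable {n : ℕ}

theorem sum_mul_pd (f : EuclideanSpace ℝ (Fin n) → ℝ) (x y : EuclideanSpace ℝ (Fin n)) :
    ∑ i, y i * pd f i x = fderiv ℝ f x y := by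
  conv_rhs => rw [← (EuclideanSpace.basisFun (Fin n) ℝ).toBasis.sum_repr y]
  simp [pd, map_sum]

theorem pd_smul_of_homogeneous {f : EuclideanSpace ℝ (Fin n) → ℝ} {k : ℕ}
    (hom : ∀ (t : ℝ) y, f (t • y) = t ^ (k + 1) * f y) {t : ℝ} (ht : t ≠ 0) (i : Fin n)
    (x : EuclideanSpace ℝ (Fin n)) : pd f i (t • x) = t ^ k * pd f i x := by
  simp [pd, fderiv_smul_of_homogeneous hom ht]

theorem differentiableAt_pd {f : EuclideanSpace ℝ (Fin n) → ℝ} {x : EuclideanSpace ℝ (Fin n)}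
    (hf : ContDiffAt ℝ 2 f x) (i : Fin n) : DifferentiableAt ℝ (pd f i) x :=
  ((hf.fderiv_right (m := 1) le_rfl).differentiableAt one_ne_zero).clm_apply
    (differentiableAt_const _)

theorem pd_pd_eq_fderiv_fderiv {f : EuclideanSpace ℝ (Fin n) → ℝ} {x : EuclideanSpace ℝ (Fin n)}
    (hf : ContDiffAt ℝ 2 f x) (i j : Fin n) :
    pd (pd f i) j x =
      fderiv ℝ (fderiv ℝ f) x (EuclideanSpace.single j 1) (EuclideanSpace.single i 1) := by
  change fderiv ℝ (fun y => fderiv ℝ f y (EuclideanSpace.single i 1)) x _ = _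
  rw [fderiv_clm_apply ((hf.fderiv_right (m := 1) le_rfl).differentiableAt one_ne_zero)
    (differentiableAt_const _)]
  simp

theorem pd_pd_comm {f : EuclideanSpace ℝ (Fin n) → ℝ} {x : EuclideanSpace ℝ (Fin n)}
    (hf : ContDiffAt ℝ 2 f x) (i j : Fin n) : pd (pd f i) j x = pd (pd f j) i x := by
  rw [pd_pd_eq_fderiv_fderiv hf, pd_pd_eq_fderiv_fderiv hf, (hf.isSymmSndFDerivAt (by simp)).eq]

theorem pd_sq_div_two {F : EuclideanSpace ℝ (Fin n) → ℝ} {x : EuclideanSpace ℝ (Fin n)}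
    (hF : DifferentiableAt ℝ F x) (k : Fin n) :
    pd (fun η => F η ^ 2 / 2) k x = F x * pd F k x := by
  have h : HasFDerivAt (fun η => F η ^ 2 / 2) ((↑2 * F x ^ (2 - 1) / 2) • fderiv ℝ F x) x :=
    ((hasDerivAt_pow 2 (F x)).div_const 2).comp_hasFDerivAt x hF.hasFDerivAt
  simp [pd, h.fderiv]

end PartialDerivatives

def aCoeffMatrix {n : ℕ} (F : EuclideanSpace ℝ (Fin n) → ℝ) (ξ : EuclideanSpace ℝ (Fin n)) :
    Matrix (Fin n) (Fin n) ℝ :=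
  Matrix.of fun i j => aCoeff F i j ξ

namespace IsMinkowskiNorm
variable {n : ℕ} {F : EuclideanSpace ℝ (Fin n) → ℝ}

theorem sq_div_two_smul (hF : IsMinkowskiNorm F) (t : ℝ) (y : EuclideanSpace ℝ (Fin n)) :
    F (t • y) ^ 2 / 2 = t ^ (1 + 1) * (F y ^ 2 / 2) := by
  rw [hF.homog, mul_pow, sq_abs]
  ring

theorem sum_mul_pd_self (hF : IsMinkowskiNorm F) {ξ : EuclideanSpace ℝ (Fin n)}
    (hd : DifferentiableAt ℝ F ξ) : ∑ k, ξ k * pd F k ξ = F ξ := by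
  rw [sum_mul_pd, fderiv_apply_self_of_homogeneous hd 1, Nat.cast_one, one_mul]
  filter_upwards [eventually_gt_nhds one_pos] with t ht
  rw [hF.homog, abs_of_pos ht, pow_one]

end IsMinkowskiNorm

namespace IsStronglyConvexMinkowskiNormC2
open Matrix
variable {n : ℕ} {F : EuclideanSpace ℝ (Fin n) → ℝ} {ξ : EuclideanSpace ℝ (Fin n)}

theorem contDiffAt (hF : IsStronglyConvexMinkowskiNormC2 F) (hξ : ξ ≠ 0) : ContDiffAt ℝ 2 F ξ :=
  hF.contDiff2.contDiffAt (isOpen_compl_singleton.mem_nhds hξ)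

theorem differentiableAt (hF : IsStronglyConvexMinkowskiNormC2 F) (hξ : ξ ≠ 0) :
    DifferentiableAt ℝ F ξ :=
  (hF.contDiffAt hξ).differentiableAt two_ne_zero

theorem contDiffAt_sq_div_two (hF : IsStronglyConvexMinkowskiNormC2 F) (hξ : ξ ≠ 0) :
    ContDiffAt ℝ 2 (fun η => F η ^ 2 / 2) ξ :=
  ((hF.contDiffAt hξ).pow 2).div_const 2

theorem aCoeffMatrix_mulVec (hF : IsStronglyConvexMinkowskiNormC2 F) (hξ : ξ ≠ 0) :
    aCoeffMatrix F ξ *ᵥ ξ.ofLp = F ξ • fun k => pd F k ξ := by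
  ext i
  have hEuler : fderiv ℝ (pd (fun η => F η ^ 2 / 2) i) ξ ξ = pd (fun η => F η ^ 2 / 2) i ξ := by
    rw [fderiv_apply_self_of_homogeneous (differentiableAt_pd (hF.contDiffAt_sq_div_two hξ) i) 1, Nat.cast_one, one_mul]
    filter_upwards [eventually_ne_nhds one_ne_zero] with t ht
    exact pd_smul_of_homogeneous hF.sq_div_two_smul ht i ξ
  calc (aCoeffMatrix F ξ *ᵥ ξ.ofLp) i = ∑ j, ξ j * pd (pd (fun η => F η ^ 2 / 2) i) j ξ := by
        simp only [aCoeffMatrix, aCoeff, mulVec, dotProduct, of_apply, mul_comm]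
    _ = F ξ * pd F i ξ := by
        rw [sum_mul_pd, hEuler, pd_sq_div_two (hF.differentiableAt hξ)]

theorem posSemidef_aCoeffMatrix (hF : IsStronglyConvexMinkowskiNormC2 F) (hξ : ξ ≠ 0) :
    (aCoeffMatrix F ξ).PosSemidef := by
  refine .of_dotProduct_mulVec_nonneg ?_ fun V => ?_
  · ext i j
    exact pd_pd_comm (hF.contDiffAt_sq_div_two hξ) j i
  · rcases eq_or_ne V 0 with rfl | hV
    · simp
    have := hF.posDef ξ hξ (WithLp.toLp 2 V) (by simpa using hV)
    simpa [aCoeffMatrix, dotProduct, mulVec, Finset.mul_sum, mul_comm, mul_left_comm] using this.le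

end IsStronglyConvexMinkowskiNormC2

theorem kato_inequality_general {n : ℕ}
    (F : EuclideanSpace ℝ (Fin n) → ℝ) (hF : IsStronglyConvexMinkowskiNormC2 F)
    (ξ : EuclideanSpace ℝ (Fin n)) (hξ : ξ ≠ 0)
    (U : Matrix (Fin n) (Fin n) ℝ) :
    ∑ i, ∑ j, ∑ k, ∑ l, aCoeff F i j ξ * (pd F k ξ) * (pd F l ξ) * U i k * U j l
      ≤ ∑ i, ∑ j, ∑ k, ∑ l, aCoeff F i j ξ * aCoeff F k l ξ * U i k * U j l := by
  set A := aCoeffMatrix F ξ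
  set v : Fin n → ℝ := fun k => pd F k ξ
  have hA : A.PosSemidef := hF.posSemidef_aCoeffMatrix hξ
  have hAv : (A - Matrix.vecMulVec v v).PosSemidef :=
    hA.sub_vecMulVec (hF.pos ξ hξ).ne' (hF.aCoeffMatrix_mulVec hξ)
      (hF.sum_mul_pd_self (hF.differentiableAt hξ))
  have key := (hA.conjTranspose_mul_mul_same U).sum_sum_mul_nonneg hAv
  simp only [Matrix.conjTranspose_eq_transpose_of_trivial, Matrix.sub_apply, mul_sub,
    Finset.sum_sub_distrib, Matrix.sum_sum_transpose_mul_mul_apply_mul, sub_nonneg] at key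
  simpa only [A, v, aCoeffMatrix, Matrix.of_apply, Matrix.vecMulVec_apply, ← mul_assoc] using key

/-- Kato-type inequality:
`Σ a_{ij} a_{kl} U_{ik} U_{jl} ≥ Σ a_{ij} F_k F_l U_{ik} U_{jl}`
for every symmetric matrix `U`. -/
theorem kato_inequality {n : ℕ} (hn : 1 ≤ n)
    (F : EuclideanSpace ℝ (Fin n) → ℝ) (hF : IsStronglyConvexMinkowskiNormC2 F)
    (ξ : EuclideanSpace ℝ (Fin n)) (hξ : ξ ≠ 0)
    (U : Matrix (Fin n) (Fin n) ℝ) (hU : U.IsSymm) :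
    ∑ i, ∑ j, ∑ k, ∑ l, aCoeff F i j ξ * (pd F k ξ) * (pd F l ξ) * U i k * U j l
      ≤ ∑ i, ∑ j, ∑ k, ∑ l, aCoeff F i j ξ * aCoeff F k l ξ * U i k * U j l :=
  kato_inequality_general F hF ξ hξ U
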